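/- arXiv:1504.04283 — 5 statements merged into one kernel-verified Lean document; each statement's English description precedes it below -/
import Mathlib

section
/- On the VB-mesh, for every index i with 1 ≤ i ≤ J−2 (so that t_{i+1} ≤ t_{J−1} < α and all three points x_{i−1}, x_i, x_{i+1} lie on the graded part), one has the identity ε(h_{i+1} − h_i)/(h_i h_{i+1}) = 2(q − t_i)/(aq), and consequently ε(h_{i+1} − h_i)/(h_i h_{i+1}) ≤ 2/a. -/
/-- `ψ(t) = aεt/(q−t)`, the Bakhvalov mesh-generating function on the fine part. -/
noncomputable def psi (a ε q t : ℝ) : ℝ := a * ε * t / (q - t)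

/-- `ψ′(t) = aεq/(q−t)²`. -/
noncomputable def psi' (a ε q t : ℝ) : ℝ := a * ε * q / (q - t) ^ 2

/-- The transition parameter `α = (q − √(aεq(1−q+aε)))/(1+aε)` of the VB-mesh. -/
noncomputable def alph (a ε q : ℝ) : ℝ :=
  (q - Real.sqrt (a * ε * q * (1 - q + a * ε))) / (1 + a * ε)

/-- The mesh-generating function `λ`: `ψ` on `[0,α]`, its tangent line on `[α,1]`. -/
noncomputable def lam (a ε q t : ℝ) : ℝ :=
  if t ≤ alph a ε q then psi a ε q t
  else psi a ε q (alph a ε q) + psi' a ε q (alph a ε q) * (t - alph a ε q)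

/-- VB-mesh points `x_i = λ(i/N)`. -/
noncomputable def meshx (a ε q : ℝ) (N i : ℕ) : ℝ := lam a ε q ((i : ℝ) / (N : ℝ))

/-- Mesh steps `h_i = x_i − x_{i−1}`. -/
noncomputable def meshh (a ε q : ℝ) (N i : ℕ) : ℝ :=
  meshx a ε q N i - meshx a ε q N (i - 1)

/-- Averaged mesh steps `h̄_i = (h_i + h_{i+1})/2`. -/
noncomputable def meshhb (a ε q : ℝ) (N i : ℕ) : ℝ :=
  (meshh a ε q N i + meshh a ε q N (i + 1)) / 2

/-- The coarse (uniform) step `H = ψ′(α)/N` of the VB-mesh. -/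
noncomputable def bigH (a ε q : ℝ) (N : ℕ) : ℝ := psi' a ε q (alph a ε q) / N

/-!
On `[0, α]` the mesh is `x_i = ψ(t_i)`, and `ψ(t) − ψ(s) = aεq (t − s) / ((q − t)(q − s))`.
Hence with `δ = 1/N` the reciprocal step `1/h_i = (q − t_i)(q − t_i + δ)/(aεqδ)` is quadratic
in `t_i`, and `ε(h_{i+1} − h_i)/(h_i h_{i+1}) = ε(1/h_i − 1/h_{i+1})` is its first difference,
the linear function `2(q − t_i)/(aq)` of `t_i`, which is at most `2/a` since `t_i ≥ 0`.
-/

section VBMesh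

variable {a ε q : ℝ}

theorem alph_lt (hq : 0 < q) (haε : 0 < a * ε) : alph a ε q < q := by
  rw [alph, div_lt_iff₀ (by linarith)]
  nlinarith [Real.sqrt_nonneg (a * ε * q * (1 - q + a * ε)), mul_pos hq haε]

theorem lam_eq_psi {t : ℝ} (ht : t ≤ alph a ε q) : lam a ε q t = psi a ε q t := if_pos ht

theorem meshh_eq_lam_sub_lam {N i : ℕ} (hi : 1 ≤ i) :
    meshh a ε q N i = lam a ε q (i / N) - lam a ε q (i / N - 1 / N) := by
  rw [meshh, meshx, meshx, Nat.cast_sub hi, Nat.cast_one, sub_div]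

theorem psi_sub_psi {s t : ℝ} (hs : q - s ≠ 0) (ht : q - t ≠ 0) :
    psi a ε q t - psi a ε q s = a * ε * q * (t - s) / ((q - t) * (q - s)) := by
  unfold psi
  field_simp
  ring

theorem psi_step_ratio {s δ : ℝ} (ha : a ≠ 0) (hε : ε ≠ 0) (hq : q ≠ 0) (hδ : δ ≠ 0)
    (hprev : q - (s - δ) ≠ 0) (hcur : q - s ≠ 0) (hnext : q - (s + δ) ≠ 0) :
    ε * ((psi a ε q (s + δ) - psi a ε q s) - (psi a ε q s - psi a ε q (s - δ))) /
        ((psi a ε q s - psi a ε q (s - δ)) * (psi a ε q (s + δ) - psi a ε q s)) =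
      2 * (q - s) / (a * q) := by
  rw [psi_sub_psi hprev hcur, psi_sub_psi hcur hnext, sub_sub_cancel, add_sub_cancel_left]
  field_simp
  ring

end VBMesh

theorem stmt_3_general (q a ε : ℝ) (hq0 : 0 < q) (ha : 0 < a) (hε : 0 < ε)
    (N : ℕ) (J : ℕ) (hJN : J ≤ N)
    (hJl : ((J : ℝ) - 1) / (N : ℝ) < alph a ε q)
    (i : ℕ) (hi1 : 1 ≤ i) (hi2 : i + 2 ≤ J) :
    ε * (meshh a ε q N (i + 1) - meshh a ε q N i) /
        (meshh a ε q N i * meshh a ε q N (i + 1)) =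
      2 * (q - (i : ℝ) / (N : ℝ)) / (a * q) ∧
    ε * (meshh a ε q N (i + 1) - meshh a ε q N i) /
        (meshh a ε q N i * meshh a ε q N (i + 1)) ≤ 2 / a := by
  have hN : (0 : ℝ) < N := by exact_mod_cast (by omega : 0 < N)
  set t : ℝ := i / N
  set δ : ℝ := 1 / N
  have hδ : 0 < δ := by positivity
  have hαq := alph_lt hq0 (mul_pos ha hε)
  have hiJ : (i : ℝ) + 2 ≤ J := by exact_mod_cast hi2
  have hgraded : t + δ ≤ alph a ε q := calc
    t + δ = ((i : ℝ) + 1) / N := by rw [add_div]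
    _ ≤ ((J : ℝ) - 1) / N := by gcongr; linarith
    _ ≤ alph a ε q := hJl.le
  have hstep : meshh a ε q N i = psi a ε q t - psi a ε q (t - δ) := by
    rw [meshh_eq_lam_sub_lam hi1, lam_eq_psi (by linarith), lam_eq_psi (by linarith)]
  have hstep_succ : meshh a ε q N (i + 1) = psi a ε q (t + δ) - psi a ε q t := by
    rw [meshh_eq_lam_sub_lam (by omega), Nat.cast_succ, add_div, add_sub_cancel_right,
      lam_eq_psi hgraded, lam_eq_psi (by linarith)]
  have hratio := psi_step_ratio ha.ne' hε.ne' hq0.ne' hδ.ne'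
    (by linarith : 0 < q - (t - δ)).ne' (by linarith : 0 < q - t).ne'
    (by linarith : 0 < q - (t + δ)).ne'
  rw [hstep, hstep_succ, hratio]
  refine ⟨rfl, ?_⟩
  calc 2 * (q - t) / (a * q) ≤ 2 * q / (a * q) := by gcongr; linarith [show 0 ≤ t by positivity]
    _ = 2 / a := by field_simp

/-- on the graded part of the VB-mesh (indices `1 ≤ i ≤ J−2`),
`ε(h_{i+1} − h_i)/(h_i h_{i+1}) = 2(q − t_i)/(aq) ≤ 2/a`. -/
theorem stmt_3 (q a ε : ℝ) (hq0 : 0 < q) (hq1 : q < 1) (ha : 0 < a) (hε : 0 < ε)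
    (haq : a * ε < q) (N : ℕ) (hN : 2 ≤ N) (J : ℕ) (hJ1 : 1 ≤ J) (hJN : J ≤ N)
    (hJl : ((J : ℝ) - 1) / (N : ℝ) < alph a ε q)
    (hJr : alph a ε q ≤ (J : ℝ) / (N : ℝ))
    (i : ℕ) (hi1 : 1 ≤ i) (hi2 : i + 2 ≤ J) :
    ε * (meshh a ε q N (i + 1) - meshh a ε q N i) /
        (meshh a ε q N i * meshh a ε q N (i + 1)) =
      2 * (q - (i : ℝ) / (N : ℝ)) / (a * q) ∧
    ε * (meshh a ε q N (i + 1) - meshh a ε q N i) /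
        (meshh a ε q N i * meshh a ε q N (i + 1)) ≤ 2 / a :=
  stmt_3_general q a ε hq0 ha hε N J hJN hJl i hi1 hi2
end

section
/- On the VB-mesh, the uniform step size H of the coarse part satisfies H = aεq/(N(q−α)²) and H ≤ 1/((1−q)N); in particular NH is bounded by a constant depending only on q. -/
/-- the coarse step satisfies `H = aεq/(N(q−α)²)` and
`H ≤ 1/((1−q)N)`; in particular `NH ≤ 1/(1−q)`. -/
theorem stmt_6 (q a ε : ℝ) (hq0 : 0 < q) (hq1 : q < 1) (ha : 0 < a) (hε : 0 < ε)
    (haq : a * ε < q) (N : ℕ) (hN : 2 ≤ N) :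
    bigH a ε q N = a * ε * q / ((N : ℝ) * (q - alph a ε q) ^ 2) ∧
      bigH a ε q N ≤ 1 / ((1 - q) * (N : ℝ)) ∧
      (N : ℝ) * bigH a ε q N ≤ 1 / (1 - q) := by
  have hu : 0 < a * ε := mul_pos ha hε
  set u := a * ε with hudef
  have hq1' : (0:ℝ) < 1 - q := by linarith
  have hw : (0:ℝ) < 1 - q + u := by linarith
  have hs0 : 0 ≤ u * q * (1 - q + u) := mul_nonneg (mul_pos hu hq0).le hw.le
  set t := Real.sqrt (u * q * (1 - q + u)) with htdef
  have ht0 : 0 ≤ t := Real.sqrt_nonneg _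
  have ht2 : t ^ 2 = u * q * (1 - q + u) := Real.sq_sqrt hs0
  have halph : alph a ε q = (q - t) / (1 + u) := rfl
  have h1u : (0:ℝ) < 1 + u := by linarith
  have hqa : q - alph a ε q = (u * q + t) / (1 + u) := by
    rw [halph]; field_simp; ring
  have hqapos : 0 < q - alph a ε q := by
    rw [hqa]
    exact div_pos (by nlinarith) h1u
  have hN0 : (0:ℝ) < (N:ℝ) := by exact_mod_cast Nat.lt_of_lt_of_le (by norm_num) hN
  have heq : bigH a ε q N = a * ε * q / ((N : ℝ) * (q - alph a ε q) ^ 2) := by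
    unfold bigH psi'
    rw [div_div]
    ring_nf
  have hle4 : u * (1 - q + u) ≤ 4 * q := by nlinarith
  have h4 : (u * (1 - q + u)) ^ 2 ≤ (2 * t) ^ 2 := by
    nlinarith [mul_pos hu hw, mul_nonneg (mul_pos hu hw).le hq0.le]
  have hkey : u * (1 - q + u) ≤ 2 * t :=
    le_of_pow_le_pow_left₀ two_ne_zero (by linarith) h4
  have hineq : a * ε * q * (1 - q) ≤ (q - alph a ε q) ^ 2 := by
    rw [← hudef, hqa, div_pow, le_div_iff₀ (by positivity)]
    nlinarith [mul_le_mul_of_nonneg_left hkey (mul_pos hu hq0).le,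
      mul_pos hu hq0, mul_pos (mul_pos hu hu) hq0,
      mul_pos (mul_pos (mul_pos hu hu) hq0) hq0, mul_pos (mul_pos hu hq0) (mul_pos hu hq0)]
  have h2 : bigH a ε q N ≤ 1 / ((1 - q) * (N : ℝ)) := by
    rw [heq, div_le_div_iff₀ (by positivity) (by positivity)]
    nlinarith [mul_le_mul_of_nonneg_left hineq hN0.le]
  refine ⟨heq, h2, ?_⟩
  calc (N:ℝ) * bigH a ε q N ≤ (N:ℝ) * (1 / ((1 - q) * (N : ℝ))) :=
        mul_le_mul_of_nonneg_left h2 hN0.le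
    _ = 1 / (1 - q) := by
        field_simp
end

section
/- (M-criterion) Let A be an n×n real matrix that is an L-matrix, i.e., all diagonal entries of A are positive and all off-diagonal entries are nonpositive. Suppose there exist a vector w ∈ ℝⁿ with w_i > 0 for all i and a constant γ > 0 such that (Aw)_i ≥ γ for all i. Then A is invertible, every entry of A⁻¹ is nonnegative, and ‖A⁻¹‖_∞ ≤ γ⁻¹ ‖w‖_∞, where ‖·‖_∞ denotes the maximum vector norm and the subordinate matrix norm (maximum absolute row sum). -/
/-- Maximum absolute row sum norm of a matrix. -/
noncomputable def matNorm {n : ℕ} (A : Matrix (Fin n) (Fin n) ℝ) : ℝ :=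
  ⨆ i, ∑ j, |A i j|

/-- Maximum norm of a vector. -/
noncomputable def vecNorm {n : ℕ} (v : Fin n → ℝ) : ℝ := ⨆ i, |v i|

/-- Monotonicity lemma for L-matrices with positive dominant vector. -/
lemma Lmono (n : ℕ) (A : Matrix (Fin n) (Fin n) ℝ)
    (hoff : ∀ i j, i ≠ j → A i j ≤ 0)
    (w : Fin n → ℝ) (hw : ∀ i, 0 < w i) (γ : ℝ) (hγ : 0 < γ)
    (hAw : ∀ i, γ ≤ A.mulVec w i)
    (x : Fin n → ℝ) (hx : ∀ i, 0 ≤ A.mulVec x i) : ∀ i, 0 ≤ x i := by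
  by_contra hcon
  push_neg at hcon
  obtain ⟨i0, hi0⟩ := hcon
  have hne : (Finset.univ : Finset (Fin n)).Nonempty := ⟨i0, Finset.mem_univ _⟩
  obtain ⟨k, -, hk⟩ := Finset.exists_min_image Finset.univ (fun i => x i / w i) hne
  have hkneg : x k / w k < 0 := by
    have := hk i0 (Finset.mem_univ _)
    have : x k / w k ≤ x i0 / w i0 := this
    have h2 : x i0 / w i0 < 0 := div_neg_of_neg_of_pos hi0 (hw i0)
    linarith
  set t : ℝ := -(x k / w k) with ht
  have htpos : 0 < t := by rw [ht]; linarith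
  set y : Fin n → ℝ := fun i => x i + t * w i with hy
  have hynn : ∀ j, 0 ≤ y j := by
    intro j
    have h1 : x k / w k ≤ x j / w j := hk j (Finset.mem_univ _)
    have h2 : x k / w k * w j ≤ x j := by
      calc x k / w k * w j ≤ x j / w j * w j :=
            mul_le_mul_of_nonneg_right h1 (hw j).le
        _ = x j := div_mul_cancel₀ _ (hw j).ne'
    show 0 ≤ x j + t * w j
    rw [ht]
    linarith
  have hyk : y k = 0 := by
    show x k + t * w k = 0
    rw [ht, neg_mul, div_mul_cancel₀ _ (hw k).ne']
    ring
  have hAy : A.mulVec y k = A.mulVec x k + t * A.mulVec w k := by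
    simp only [Matrix.mulVec, dotProduct, hy, mul_add, Finset.sum_add_distrib,
      Finset.mul_sum]
    congr 1
    exact Finset.sum_congr rfl fun j _ => by ring
  have hpos : 0 < A.mulVec y k := by
    rw [hAy]
    have := hx k
    have h2 : γ ≤ A.mulVec w k := hAw k
    nlinarith
  have hnonpos : A.mulVec y k ≤ 0 := by
    rw [Matrix.mulVec, dotProduct]
    apply Finset.sum_nonpos
    intro j _
    rcases eq_or_ne j k with rfl | hjk
    · rw [hyk]; simp
    · exact mul_nonpos_of_nonpos_of_nonneg (hoff k j (Ne.symm hjk)) (hynn j)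
  linarith

/-- M-criterion: if `A` is an L-matrix (positive diagonal, nonpositive
off-diagonal entries) and `w > 0` satisfies `Aw ≥ γ > 0` componentwise, then `A` is
invertible, `A⁻¹ ≥ 0` entrywise, and `‖A⁻¹‖_∞ ≤ γ⁻¹ ‖w‖_∞`. -/
theorem stmt_7 (n : ℕ) (A : Matrix (Fin n) (Fin n) ℝ)
    (hdiag : ∀ i, 0 < A i i) (hoff : ∀ i j, i ≠ j → A i j ≤ 0)
    (w : Fin n → ℝ) (hw : ∀ i, 0 < w i) (γ : ℝ) (hγ : 0 < γ)
    (hAw : ∀ i, γ ≤ A.mulVec w i) :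
    IsUnit A ∧ (∀ i j, 0 ≤ A⁻¹ i j) ∧ matNorm A⁻¹ ≤ γ⁻¹ * vecNorm w := by
  have mono := Lmono n A hoff w hw γ hγ hAw
  -- injectivity ⇒ det ≠ 0
  have hdet : A.det ≠ 0 := by
    intro h0
    obtain ⟨v, hvne, hv⟩ := (Matrix.exists_mulVec_eq_zero_iff).mpr h0
    have h1 : ∀ i, 0 ≤ v i := mono v (fun i => by rw [hv]; exact le_refl 0)
    have h2 : ∀ i, 0 ≤ (-v) i := mono (-v) (fun i => by
      rw [Matrix.mulVec_neg, hv]; simp)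
    apply hvne
    funext i
    have := h1 i; have := h2 i
    simp only [Pi.neg_apply] at this
    simp only [Pi.zero_apply]; linarith
  have hU : IsUnit A := (Matrix.isUnit_iff_isUnit_det A).mpr (isUnit_iff_ne_zero.mpr hdet)
  have hinv : A * A⁻¹ = 1 := Matrix.mul_nonsing_inv A (isUnit_iff_ne_zero.mpr hdet)
  -- nonnegativity of inverse
  have hnn : ∀ i j, 0 ≤ A⁻¹ i j := by
    intro i j
    have := mono (fun l => A⁻¹ l j) (fun i => by
      have : A.mulVec (fun l => A⁻¹ l j) i = (A * A⁻¹) i j := by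
        simp [Matrix.mulVec, dotProduct, Matrix.mul_apply]
      rw [this, hinv, Matrix.one_apply]
      split <;> norm_num)
    exact this i
  refine ⟨hU, hnn, ?_⟩
  -- row sums
  set u : Fin n → ℝ := A⁻¹.mulVec (fun _ => 1) with hu
  have hAu : A.mulVec u = fun _ => 1 := by
    rw [hu, Matrix.mulVec_mulVec, hinv]
    funext i
    simp [Matrix.mulVec, dotProduct, Matrix.one_apply]
  have hub : ∀ i, γ * u i ≤ w i := by
    intro i
    have hm := mono (w - γ • u) (fun i => by
      rw [Matrix.mulVec_sub, Matrix.mulVec_smul, hAu]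
      have := hAw i
      simp only [Pi.sub_apply, Pi.smul_apply, smul_eq_mul, mul_one]
      linarith)
    have := hm i
    simp only [Pi.sub_apply, Pi.smul_apply, smul_eq_mul] at this
    linarith
  have hwn : ∀ i, w i ≤ vecNorm w := by
    intro i
    calc w i ≤ |w i| := le_abs_self _
      _ ≤ vecNorm w := by
          unfold vecNorm
          exact le_ciSup (f := fun i => |w i|) (Set.Finite.bddAbove (Set.finite_range _)) i
  unfold matNorm
  rcases Nat.eq_zero_or_pos n with rfl | hn
  · have h2 : vecNorm w = 0 := by
      unfold vecNorm; exact Real.iSup_of_isEmpty _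
    rw [h2, mul_zero, Real.iSup_of_isEmpty]
  · have : Nonempty (Fin n) := ⟨⟨0, hn⟩⟩
    apply ciSup_le
    intro i
    have hrow : ∑ j, |A⁻¹ i j| = u i := by
      rw [hu]
      simp only [Matrix.mulVec, dotProduct, mul_one]
      exact Finset.sum_congr rfl fun j _ => abs_of_nonneg (hnn i j)
    rw [hrow]
    have h1 : u i ≤ γ⁻¹ * w i := by
      rw [le_inv_mul_iff₀ hγ] at *
      exact hub i
    calc u i ≤ γ⁻¹ * w i := h1
      _ ≤ γ⁻¹ * vecNorm w := by
          apply mul_le_mul_of_nonneg_left (hwn i) (by positivity)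
end

section
/- On the VB-mesh there exists a constant C, depending only on a, q, max|b| and max|c| (but not on ε or N), such that ‖A_N‖ ≤ C N²/ε for all N ≥ 2 and all ε with 0 < aε < q. -/
/-- The upwind finite-difference matrix `A_N` on the mesh `x` for
`-ε u'' - b u' + c u`, with Dirichlet rows `0` and `N`. -/
noncomputable def upwind (b c : ℝ → ℝ) (ε : ℝ) (N : ℕ) (x : ℕ → ℝ) :
    Matrix (Fin (N + 1)) (Fin (N + 1)) ℝ :=
  fun i j =>
    let h : ℕ → ℝ := fun k => x k - x (k - 1)
    let hb : ℕ → ℝ := fun k => (h k + h (k + 1)) / 2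
    if (i : ℕ) = 0 ∨ (i : ℕ) = N then (if j = i then 1 else 0)
    else if (j : ℕ) + 1 = (i : ℕ) then -ε / (h (i : ℕ) * hb (i : ℕ))
    else if (j : ℕ) = (i : ℕ) + 1 then
      -ε / (h ((i : ℕ) + 1) * hb (i : ℕ)) - b (x (i : ℕ)) / h ((i : ℕ) + 1)
    else if j = i then
      ε / (h (i : ℕ) * hb (i : ℕ)) +
        (ε / (h ((i : ℕ) + 1) * hb (i : ℕ)) + b (x (i : ℕ)) / h ((i : ℕ) + 1)) +
        c (x (i : ℕ))
    else 0

/-!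
The VB-mesh generating function `λ` has slope at least `ψ'(0) = aε/q` everywhere: `ψ'` increases
on `[0, α]` and `λ` continues linearly with slope `ψ'(α)`. Hence every step satisfies
`h_i ≥ m := aε/(qN)`, and since `λ(0) = 0`, `λ(1) = 1` all nodes lie in `[0, 1]`, where `b` and `c`
are bounded. An interior row of `A_N` has three nonzero entries, whose absolute values add up to at
most `4ε/m² + 2‖b‖/m + ‖c‖ = O(N²/ε)`; the Dirichlet rows contribute `1 ≤ (q/a) N²/ε`.
-/

lemma sum_abs_le_add_add_of_eq_zero {ι : Type*} [Fintype ι] [DecidableEq ι] (f : ι → ℝ)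
    (j₁ j₂ j₃ : ι)
    (hf : ∀ j, j ≠ j₁ → j ≠ j₂ → j ≠ j₃ → f j = 0) :
    ∑ j, |f j| ≤ |f j₁| + |f j₂| + |f j₃| := by
  calc ∑ j, |f j|
      ≤ ∑ j, ((if j = j₁ then |f j₁| else 0) + (if j = j₂ then |f j₂| else 0) +
          (if j = j₃ then |f j₃| else 0)) := by
        refine Finset.sum_le_sum fun j _ => ?_
        by_cases h₁ : j = j₁ <;> by_cases h₂ : j = j₂ <;> by_cases h₃ : j = j₃ <;>
          simp_all [abs_nonneg]
    _ = |f j₁| + |f j₂| + |f j₃| := by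
        simp only [Finset.sum_add_distrib, Finset.sum_ite_eq', Finset.mem_univ, if_true]

lemma abs_upwind_stencil_le {ε m h₁ h₂ β γ B B' : ℝ} (hε : 0 ≤ ε) (hm : 0 < m)
    (hh₁ : m ≤ h₁) (hh₂ : m ≤ h₂) (hβ : |β| ≤ B) (hγ : |γ| ≤ B') :
    |-ε / (h₁ * ((h₁ + h₂) / 2))| + |ε / (h₁ * ((h₁ + h₂) / 2)) +
        (ε / (h₂ * ((h₁ + h₂) / 2)) + β / h₂) + γ| +
      |-ε / (h₂ * ((h₁ + h₂) / 2)) - β / h₂| ≤ 4 * ε / m ^ 2 + 2 * B / m + B' := by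
  have hmid : m ≤ (h₁ + h₂) / 2 := by linarith
  have hs : ε / (h₁ * ((h₁ + h₂) / 2)) ≤ ε / m ^ 2 := by
    rw [sq]; gcongr; linarith
  have ht : ε / (h₂ * ((h₁ + h₂) / 2)) ≤ ε / m ^ 2 := by
    rw [sq]; gcongr; linarith
  have hu : |β / h₂| ≤ B / m := by
    rw [abs_div, abs_of_pos (hm.trans_le hh₂)]
    exact div_le_div₀ ((abs_nonneg _).trans hβ) hβ hm hh₂
  have hs0 : 0 ≤ ε / (h₁ * ((h₁ + h₂) / 2)) := by
    have := hm.trans_le hh₁; have := hm.trans_le hmid; positivity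
  have ht0 : 0 ≤ ε / (h₂ * ((h₁ + h₂) / 2)) := by
    have := hm.trans_le hh₂; have := hm.trans_le hmid; positivity
  set s := ε / (h₁ * ((h₁ + h₂) / 2))
  set t := ε / (h₂ * ((h₁ + h₂) / 2))
  set u := β / h₂
  rw [neg_div, neg_div, abs_neg, abs_of_nonneg hs0]
  have hd : |s + (t + u) + γ| ≤ s + t + |u| + |γ| := by
    calc |s + (t + u) + γ| ≤ |s + t| + |u| + |γ| := by
          rw [← add_assoc]; exact abs_add_three _ _ _
      _ = s + t + |u| + |γ| := by rw [abs_of_nonneg (add_nonneg hs0 ht0)]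
  have hr : |-t - u| ≤ t + |u| := by
    calc |-t - u| ≤ |-t| + |u| := abs_sub _ _
      _ = t + |u| := by rw [abs_neg, abs_of_nonneg ht0]
  have h4 : 4 * ε / m ^ 2 = 4 * (ε / m ^ 2) := by ring
  have h2 : 2 * B / m = 2 * (B / m) := by ring
  linarith

section upwind

variable {b c : ℝ → ℝ} {ε m B B' : ℝ} {N : ℕ} {x : ℕ → ℝ}

lemma sum_abs_upwind_boundary {i : Fin (N + 1)} (hi : (i : ℕ) = 0 ∨ (i : ℕ) = N) :
    ∑ j, |upwind b c ε N x i j| = 1 := by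
  simp only [upwind, if_pos hi, apply_ite abs, abs_one, abs_zero, Finset.sum_ite_eq',
    Finset.mem_univ, if_true]

lemma sum_abs_upwind_interior_le {i : Fin (N + 1)} (hi0 : (i : ℕ) ≠ 0) (hiN : (i : ℕ) ≠ N)
    (hε : 0 ≤ ε) (hm : 0 < m) (hh₁ : m ≤ x i - x (i - 1)) (hh₂ : m ≤ x (i + 1) - x i)
    (hb : |b (x i)| ≤ B) (hc : |c (x i)| ≤ B') :
    ∑ j, |upwind b c ε N x i j| ≤ 4 * ε / m ^ 2 + 2 * B / m + B' := by
  have hi : ¬((i : ℕ) = 0 ∨ (i : ℕ) = N) := by tauto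
  let j₁ : Fin (N + 1) := ⟨i - 1, by omega⟩
  let j₃ : Fin (N + 1) := ⟨i + 1, by omega⟩
  calc ∑ j, |upwind b c ε N x i j|
      ≤ |upwind b c ε N x i j₁| + |upwind b c ε N x i i| + |upwind b c ε N x i j₃| := by
        refine sum_abs_le_add_add_of_eq_zero _ _ _ _ fun j h₁ h₂ h₃ => ?_
        have h₁ : (j : ℕ) + 1 ≠ i := fun h => h₁ (Fin.ext (by simp [j₁]; omega))
        have h₃ : (j : ℕ) ≠ i + 1 := fun h => h₃ (Fin.ext (by simp [j₃]; omega))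
        simp only [upwind, if_neg hi, if_neg h₁, if_neg h₃, if_neg h₂]
    _ ≤ 4 * ε / m ^ 2 + 2 * B / m + B' := by
        have e₁ : (j₁ : ℕ) + 1 = i := by simp [j₁]; omega
        have e₂ : ¬((i : ℕ) + 1 = i) := by omega
        have e₂' : ¬((i : ℕ) = i + 1) := by omega
        have e₃ : ¬((i : ℕ) + 1 + 1 = i) := by omega
        simp only [upwind, if_neg hi, e₁, e₂, e₂', e₃, if_true, if_false, Nat.add_sub_cancel, j₃]
        exact abs_upwind_stencil_le hε hm hh₁ hh₂ hb hc

lemma matNorm_upwind_le (hε : 0 ≤ ε) (hm : 0 < m)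
    (hstep : ∀ k, 1 ≤ k → k ≤ N → m ≤ x k - x (k - 1))
    (hb : ∀ k ≤ N, |b (x k)| ≤ B) (hc : ∀ k ≤ N, |c (x k)| ≤ B') :
    matNorm (upwind b c ε N x) ≤ max 1 (4 * ε / m ^ 2 + 2 * B / m + B') := by
  refine ciSup_le fun i => ?_
  by_cases hi : (i : ℕ) = 0 ∨ (i : ℕ) = N
  · exact (sum_abs_upwind_boundary hi).le.trans (le_max_left _ _)
  · obtain ⟨hi0, hiN'⟩ := not_or.mp hi
    have hiN : (i : ℕ) < N := by omega
    refine le_max_of_le_right (sum_abs_upwind_interior_le hi0 hiN' hε hm ?_ ?_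
      (hb _ hiN.le) (hc _ hiN.le))
    · exact hstep _ (by omega) hiN.le
    · exact hstep _ (by omega) hiN

end upwind

lemma alph_mem_Ioo {a ε q : ℝ} (hae : 0 < a * ε) (haε : a * ε < q) :
    alph a ε q ∈ Set.Ioo 0 q := by
  have hq : 0 < q := hae.trans haε
  have hsqrt : Real.sqrt (a * ε * q * (1 - q + a * ε)) < q := by
    rw [Real.sqrt_lt' hq]
    nlinarith [mul_pos hq (show 0 < (q - a * ε) * (1 + a * ε) by nlinarith)]
  unfold alph
  constructor
  · exact div_pos (by linarith) (by linarith)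
  · rw [div_lt_iff₀ (by linarith)]
    nlinarith [Real.sqrt_nonneg (a * ε * q * (1 - q + a * ε))]

lemma mul_sub_le_psi_sub_psi {a ε q u v : ℝ} (hae : 0 ≤ a * ε) (hu : 0 ≤ u) (huv : u ≤ v)
    (hv : v < q) : a * ε / q * (v - u) ≤ psi a ε q v - psi a ε q u := by
  have hq : 0 < q := by linarith
  have hqu : 0 < q - u := by linarith
  have hqv : 0 < q - v := by linarith
  have heq : psi a ε q v - psi a ε q u = a * ε * q * (v - u) / ((q - u) * (q - v)) := by
    unfold psi
    field_simp
    ring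
  rw [heq, div_mul_eq_mul_div, div_le_div_iff₀ hq (by positivity)]
  have hprod : (q - u) * (q - v) ≤ q * q := by nlinarith
  nlinarith [mul_nonneg hae (sub_nonneg.2 huv)]

lemma lam_zero {a ε q : ℝ} (hae : 0 < a * ε) (haε : a * ε < q) : lam a ε q 0 = 0 := by
  rw [lam, if_pos (alph_mem_Ioo hae haε).1.le, psi]
  simp

-- `α` is chosen so that the tangent line of `ψ` at `α` passes through `(1, 1)`.
lemma lam_one {a ε q : ℝ} (hae : 0 < a * ε) (haε : a * ε < q) (hq1 : q < 1) :
    lam a ε q 1 = 1 := by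
  obtain ⟨hα0, hαq⟩ := alph_mem_Ioo hae haε
  rw [lam, if_neg (by linarith)]
  set α := alph a ε q with hα
  have hsq : (q - α * (1 + a * ε)) ^ 2 = a * ε * q * (1 - q + a * ε) := by
    have hαe : α * (1 + a * ε) = q - Real.sqrt (a * ε * q * (1 - q + a * ε)) := by
      rw [hα, alph]
      field_simp
    rw [hαe, sub_sub_cancel]
    exact Real.sq_sqrt (by have := hae.trans haε; positivity)
  have hmain : a * ε * α * (q - α) + a * ε * q * (1 - α) = (q - α) ^ 2 :=
    mul_left_cancel₀ (show 1 + a * ε ≠ 0 by linarith) (by linear_combination (-1 : ℝ) * hsq)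
  have hqα : q - α ≠ 0 := by linarith
  unfold psi psi'
  field_simp
  linear_combination hmain

lemma mul_sub_le_lam_sub_lam {a ε q u v : ℝ} (hae : 0 < a * ε) (haε : a * ε < q)
    (hu : 0 ≤ u) (huv : u ≤ v) : a * ε / q * (v - u) ≤ lam a ε q v - lam a ε q u := by
  obtain ⟨hα0, hαq⟩ := alph_mem_Ioo hae haε
  set α := alph a ε q
  have hslope : a * ε / q ≤ psi' a ε q α := by
    unfold psi'
    rw [div_le_div_iff₀ (by linarith) (pow_pos (by linarith) 2)]
    nlinarith [mul_pos hae (mul_pos hα0 (show 0 < 2 * q - α by linarith))]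
  rcases le_or_gt v α with hvα | hvα
  · rw [lam, lam, if_pos hvα, if_pos (huv.trans hvα)]
    exact mul_sub_le_psi_sub_psi hae.le hu huv (hvα.trans_lt hαq)
  rcases le_or_gt u α with huα | huα
  · rw [lam, lam, if_neg (not_le.2 hvα), if_pos huα]
    have hψ := mul_sub_le_psi_sub_psi hae.le hu huα hαq
    have hline := mul_le_mul_of_nonneg_right hslope (by linarith : 0 ≤ v - α)
    linarith
  · rw [lam, lam, if_neg (not_le.2 hvα), if_neg (not_le.2 huα)]
    have hline := mul_le_mul_of_nonneg_right hslope (by linarith : 0 ≤ v - u)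
    linarith

lemma meshx_sub_meshx_pred_ge {a ε q : ℝ} (hae : 0 < a * ε) (haε : a * ε < q) {N k : ℕ}
    (hN : 0 < N) (hk : 1 ≤ k) :
    a * ε / (q * N) ≤ meshx a ε q N k - meshx a ε q N (k - 1) := by
  have hNpos : (0 : ℝ) < N := Nat.cast_pos.2 hN
  have hgap : (k : ℝ) / N - ((k - 1 : ℕ) : ℝ) / N = 1 / N := by
    rw [Nat.cast_sub hk]
    field_simp
    ring
  have h := mul_sub_le_lam_sub_lam (u := ((k - 1 : ℕ) : ℝ) / N) (v := (k : ℝ) / N) hae haε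
    (by positivity) (by linarith [one_div_pos.2 hNpos])
  rw [hgap] at h
  unfold meshx
  convert h using 1
  field_simp

lemma meshx_mem_Icc {a ε q : ℝ} (hae : 0 < a * ε) (haε : a * ε < q) (hq1 : q < 1) {N i : ℕ}
    (hN : 0 < N) (hi : i ≤ N) : meshx a ε q N i ∈ Set.Icc 0 1 := by
  have hNpos : (0 : ℝ) < N := Nat.cast_pos.2 hN
  have ht0 : 0 ≤ (i : ℝ) / N := by positivity
  have ht1 : (i : ℝ) / N ≤ 1 := (div_le_one hNpos).2 (by exact_mod_cast hi)
  have hslope : 0 ≤ a * ε / q := div_nonneg hae.le (hae.trans haε).le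
  have h0 := mul_sub_le_lam_sub_lam hae haε le_rfl ht0
  have h1 := mul_sub_le_lam_sub_lam hae haε ht0 ht1
  rw [lam_zero hae haε] at h0
  rw [lam_one hae haε hq1] at h1
  unfold meshx
  exact ⟨by nlinarith, by nlinarith⟩

lemma max_one_stencil_bound_le {a q ε B B' : ℝ} {N : ℕ} (ha : 0 < a) (hε : 0 < ε)
    (haε : a * ε < q) (hN : 1 ≤ N) (hB : 0 ≤ B) (hB' : 0 ≤ B') :
    max 1 (4 * ε / (a * ε / (q * N)) ^ 2 + 2 * B / (a * ε / (q * N)) + B') ≤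
      (q / a + 4 * (q / a) ^ 2 + 2 * B * (q / a) + B' * (q / a)) * N ^ 2 / ε := by
  have hq : 0 < q := (mul_pos ha hε).trans haε
  have hN1 : (1 : ℝ) ≤ N := by exact_mod_cast hN
  have hNN : (N : ℝ) ≤ N ^ 2 := by nlinarith
  have hone : 1 ≤ q / a * (N ^ 2 / ε) := by
    rw [div_mul_div_comm, one_le_div (by positivity)]
    nlinarith
  have hdiff : 4 * ε / (a * ε / (q * N)) ^ 2 = 4 * (q / a) ^ 2 * (N ^ 2 / ε) := by
    field_simp
  have hconv : 2 * B / (a * ε / (q * N)) ≤ 2 * B * (q / a) * (N ^ 2 / ε) := by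
    rw [show 2 * B / (a * ε / (q * N)) = 2 * B * (q / a) * (N / ε) by field_simp]
    gcongr
  have hreac : B' ≤ B' * (q / a) * (N ^ 2 / ε) := by
    simpa [mul_assoc] using mul_le_mul_of_nonneg_left hone hB'
  have hrhs : (q / a + 4 * (q / a) ^ 2 + 2 * B * (q / a) + B' * (q / a)) * N ^ 2 / ε =
      q / a * (N ^ 2 / ε) + 4 * (q / a) ^ 2 * (N ^ 2 / ε) + 2 * B * (q / a) * (N ^ 2 / ε) +
        B' * (q / a) * (N ^ 2 / ε) := by ring
  have hdiff0 : 0 ≤ 4 * (q / a) ^ 2 * (N ^ 2 / ε) := by positivity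
  have hconv0 : 0 ≤ 2 * B * (q / a) * (N ^ 2 / ε) := by positivity
  rw [hrhs, hdiff]
  exact max_le (by linarith) (by linarith)

theorem stmt_9_general (q a : ℝ) (hq0 : 0 < q) (hq1 : q < 1) (ha : 0 < a)
    (b c : ℝ → ℝ) (hb : ContinuousOn b (Set.Icc 0 1)) (hc : ContinuousOn c (Set.Icc 0 1)) :
    ∃ C : ℝ, 0 < C ∧
      ∀ (ε : ℝ) (N : ℕ), 0 < ε → a * ε < q → 2 ≤ N →
        matNorm (upwind b c ε N (meshx a ε q N)) ≤ C * (N : ℝ) ^ 2 / ε := by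
  obtain ⟨B, hB⟩ := isCompact_Icc.exists_bound_of_continuousOn hb
  obtain ⟨B', hB'⟩ := isCompact_Icc.exists_bound_of_continuousOn hc
  have hB0 : 0 ≤ B := (norm_nonneg _).trans (hB 0 (by simp))
  have hB'0 : 0 ≤ B' := (norm_nonneg _).trans (hB' 0 (by simp))
  refine ⟨q / a + 4 * (q / a) ^ 2 + 2 * B * (q / a) + B' * (q / a), by positivity, ?_⟩
  intro ε N hε haε hN
  have hae : 0 < a * ε := mul_pos ha hε
  have hN0 : 0 < N := by omega
  have hmem (k : ℕ) (hk : k ≤ N) : meshx a ε q N k ∈ Set.Icc 0 1 :=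
    meshx_mem_Icc hae haε hq1 hN0 hk
  calc matNorm (upwind b c ε N (meshx a ε q N))
      ≤ max 1 (4 * ε / (a * ε / (q * N)) ^ 2 + 2 * B / (a * ε / (q * N)) + B') :=
        matNorm_upwind_le hε.le (by positivity)
          (fun k hk _ => meshx_sub_meshx_pred_ge hae haε hN0 hk)
          (fun k hk => hB _ (hmem k hk)) (fun k hk => hB' _ (hmem k hk))
    _ ≤ _ := max_one_stencil_bound_le ha hε haε hN0 hB0 hB'0

/-- on the VB-mesh, `‖A_N‖ ≤ C N²/ε` with `C` independent of `ε`
and `N`. -/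
theorem stmt_9 (q a β : ℝ) (hq0 : 0 < q) (hq1 : q < 1) (ha : 0 < a) (hβ : 0 < β)
    (b c : ℝ → ℝ) (hb : ContinuousOn b (Set.Icc 0 1)) (hc : ContinuousOn c (Set.Icc 0 1))
    (hbl : ∀ t ∈ Set.Icc (0 : ℝ) 1, β ≤ b t)
    (hcl : ∀ t ∈ Set.Icc (0 : ℝ) 1, 0 ≤ c t) :
    ∃ C : ℝ, 0 < C ∧
      ∀ (ε : ℝ) (N : ℕ), 0 < ε → a * ε < q → 2 ≤ N →
        matNorm (upwind b c ε N (meshx a ε q N)) ≤ C * (N : ℝ) ^ 2 / ε :=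
  stmt_9_general q a hq0 hq1 ha b c hb hc
end

section
/- Let β > 0, ε > 0, H > 0, h_J > 0 and real numbers b_J ≥ β, c_J ≥ 0 be given. Define l_J = −ε/(h_J H), r_J = −ε/H² − b_J(h_J + H)/(2H²), d_J = −l_J − r_J + ((h_J + H)/(2H)) c_J, ρ_J = β h_J/(2ε) and ρ = βH/(2ε). Then l_J(1+ρ_J)(1+ρ) + d_J(1+ρ) + r_J ≥ 0. -/
/-- the key algebraic inequality for the transition row `J` of the
preconditioned upwind matrix: with `l_J = −ε/(h_J H)`, `r_J = −ε/H² − b_J(h_J+H)/(2H²)`,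
`d_J = −l_J − r_J + ((h_J+H)/(2H))c_J`, `ρ_J = βh_J/(2ε)`, `ρ = βH/(2ε)`, one has
`l_J(1+ρ_J)(1+ρ) + d_J(1+ρ) + r_J ≥ 0`. -/
theorem stmt_11 (β ε H hJ bJ cJ : ℝ) (hβ : 0 < β) (hε : 0 < ε) (hH : 0 < H)
    (hhJ : 0 < hJ) (hbJ : β ≤ bJ) (hcJ : 0 ≤ cJ) :
    0 ≤ (-ε / (hJ * H)) * (1 + β * hJ / (2 * ε)) * (1 + β * H / (2 * ε)) +
        (-(-ε / (hJ * H)) - (-ε / H ^ 2 - bJ * (hJ + H) / (2 * H ^ 2)) +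
            ((hJ + H) / (2 * H)) * cJ) * (1 + β * H / (2 * ε)) +
        (-ε / H ^ 2 - bJ * (hJ + H) / (2 * H ^ 2)) := by
  have key : (-ε / (hJ * H)) * (1 + β * hJ / (2 * ε)) * (1 + β * H / (2 * ε)) +
        (-(-ε / (hJ * H)) - (-ε / H ^ 2 - bJ * (hJ + H) / (2 * H ^ 2)) +
            ((hJ + H) / (2 * H)) * cJ) * (1 + β * H / (2 * ε)) +
        (-ε / H ^ 2 - bJ * (hJ + H) / (2 * H ^ 2)) =
      β / (4 * ε) * (bJ * (hJ + H) / H - β) +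
      ((hJ + H) / (2 * H)) * cJ * (1 + β * H / (2 * ε)) := by
    field_simp
    ring
  rw [key]
  have h1 : 0 ≤ β / (4 * ε) * (bJ * (hJ + H) / H - β) := by
    apply mul_nonneg (by positivity)
    have : β ≤ bJ * (hJ + H) / H := by
      rw [le_div_iff₀ hH]
      nlinarith
    linarith
  have h2 : 0 ≤ ((hJ + H) / (2 * H)) * cJ * (1 + β * H / (2 * ε)) := by positivity
  linarith
end
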